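/- Under the Bradley–Terry model with implicit reward r, for any state s with reference completion y_s^ref, the optimal soft value satisfies V_t^{*,η}(s) = r(y_s^ref) + η·log E_{y_s∼π_ref}[exp(η^{-1}·Ψ(P*(y_s ≻ y_s^ref))) | s_t = s], where Ψ(t) = log(t/(1−t)) and P*(y ≻ y') = σ(r(y) − r(y')). -/

import Mathlib

noncomputable def logistic (x : ℝ) : ℝ := 1 / (1 + Real.exp (-x))
noncomputable def logit (t : ℝ) : ℝ := Real.log (t / (1 - t))

/-! Since `logit` inverts `logistic`, `Ψ(P*(y ≻ y_ref)) = r y - r y_ref`, and a constant shift of the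
reward comes out of the soft value `η log E[exp(r / η)]` unchanged. -/

open Real

lemma logistic_eq_sigmoid (x : ℝ) : logistic x = sigmoid x := one_div _

lemma logit_logistic (x : ℝ) : logit (logistic x) = x := by
  rw [logit, logistic_eq_sigmoid, ← sigmoid_neg, ← sigmoid_mul_rexp_neg,
    div_mul_cancel_left₀ (sigmoid_pos x).ne', exp_neg, inv_inv, log_exp]

lemma mul_log_sum_mul_exp_add_const {ι : Type*} (s : Finset ι) (μ f : ι → ℝ) (c : ℝ) {η : ℝ}
    (hη : η ≠ 0) (hS : ∑ i ∈ s, μ i * exp (η⁻¹ * f i) ≠ 0) :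
    η * log (∑ i ∈ s, μ i * exp (η⁻¹ * (f i + c))) =
      c + η * log (∑ i ∈ s, μ i * exp (η⁻¹ * f i)) := by
  have hfactor : ∑ i ∈ s, μ i * exp (η⁻¹ * (f i + c)) =
      exp (η⁻¹ * c) * ∑ i ∈ s, μ i * exp (η⁻¹ * f i) := by
    rw [Finset.mul_sum]
    refine Finset.sum_congr rfl fun i _ => ?_
    rw [mul_add, exp_add]
    ring
  rw [hfactor, log_mul (exp_ne_zero _) hS, log_exp, mul_add, mul_inv_cancel_left₀ hη]

theorem stmt7_general {Y : Type*} [Fintype Y] (μ : Y → ℝ) (hpos : ∀ y, 0 < μ y)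
    (r : Y → ℝ) (yref : Y) (η : ℝ) (hη : 0 < η)
    (Pstar : Y → Y → ℝ) (hP : ∀ y y', Pstar y y' = logistic (r y - r y')) :
    η * Real.log (∑ y, μ y * Real.exp (η⁻¹ * r y)) =
      r yref + η * Real.log (∑ y, μ y * Real.exp (η⁻¹ * logit (Pstar y yref))) := by
  have hlogit : ∀ y, logit (Pstar y yref) = r y - r yref := fun y => by
    rw [hP, logit_logistic]
  have hS : 0 < ∑ y, μ y * exp (η⁻¹ * (r y - r yref)) :=
    Finset.sum_pos (fun y _ => mul_pos (hpos y) (exp_pos _)) ⟨yref, Finset.mem_univ _⟩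
  simp_rw [hlogit]
  simpa only [sub_add_cancel] using
    mul_log_sum_mul_exp_add_const Finset.univ μ (fun y => r y - r yref) (r yref) hη.ne' hS.ne'

theorem stmt7 {Y : Type*} [Fintype Y] (μ : Y → ℝ) (hpos : ∀ y, 0 < μ y)
    (hsum : ∑ y, μ y = 1) (r : Y → ℝ) (yref : Y) (η : ℝ) (hη : 0 < η)
    (Pstar : Y → Y → ℝ) (hP : ∀ y y', Pstar y y' = logistic (r y - r y')) :
    η * Real.log (∑ y, μ y * Real.exp (η⁻¹ * r y)) =
      r yref + η * Real.log (∑ y, μ y * Real.exp (η⁻¹ * logit (Pstar y yref))) :=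
  stmt7_general μ hpos r yref η hη Pstar hP
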